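/- arXiv:1711.09282 — 6 statements merged into one kernel-verified Lean document; each statement's English description precedes it below -/
import Mathlib

section
/- Let G be a bipartite graph with parts X and Y, each of size n, with m edges. Then the number of copies of K_{a,b} in G with the a-side in X and the b-side in Y is at least C(n,a) * C( n*C(m/n, a) / C(n,a), b ), where C(x,k) denotes the generalized (truncated) binomial coefficient ∏_{i=0}^{k-1}(x-i)/k! when x ≥ k ≥ 0 and 0 otherwise. -/
open Finset
open scoped Classical

noncomputable def gbinom (x : ℝ) (k : ℕ) : ℝ :=
  if (k : ℝ) ≤ x then (∏ i ∈ Finset.range k, (x - i)) / (Nat.factorial k) else 0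

/-!
Write `N(A)` for the common neighbourhood of `A ⊆ X` and `d(y)` for the degree of `y ∈ Y`.
Double counting gives `#K_{a,b} = ∑_{|A| = a} C(|N(A)|, b)` and
`∑_{|A| = a} |N(A)| = ∑_y C(d(y), a)`, while `∑_y d(y) = m`. Jensen's inequality for
`x ↦ C(x, k)`, applied first over `y ∈ Y` and then over the `C(n, a)` sets `A`, gives the bound.
Since the truncated `gbinom` jumps at `x = k`, Jensen is applied to the continuous convex minorant
`∏_{i<k} max (x - i) 0` of `k! * gbinom x k`, which agrees with it at natural numbers and for
`x ≥ k`.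
-/

noncomputable def truncDescFactorial (k : ℕ) (x : ℝ) : ℝ := ∏ i ∈ range k, max (x - i) 0

namespace truncDescFactorial

lemma nonneg (k : ℕ) (x : ℝ) : 0 ≤ truncDescFactorial k x :=
  prod_nonneg fun _ _ => le_max_right _ _

lemma monotone (k : ℕ) : Monotone (truncDescFactorial k) := fun _ _ hxy =>
  prod_le_prod (fun _ _ => le_max_right _ _) fun _ _ => max_le_max (by linarith) le_rfl

lemma convexOn (k : ℕ) : ConvexOn ℝ Set.univ (truncDescFactorial k) := by
  induction k with
  | zero =>
    have hone : truncDescFactorial 0 = fun _ => 1 := by funext; simp [truncDescFactorial]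
    exact hone ▸ convexOn_const 1 convex_univ
  | succ k ih =>
    have hfactor : ConvexOn ℝ Set.univ (fun x : ℝ => max (x - k) 0) :=
      ((convexOn_id convex_univ).sub (concaveOn_const _ convex_univ)).sup
        (convexOn_const 0 convex_univ)
    have hprod :
        truncDescFactorial (k + 1) = truncDescFactorial k * fun x : ℝ => max (x - k) 0 := by
      funext x; simp [truncDescFactorial, prod_range_succ]
    have hfactor_mono : Monotone fun x : ℝ => max (x - k) 0 :=
      fun _ _ hxy => max_le_max (by linarith) le_rfl
    rw [hprod]
    exact ih.mul hfactor (fun x _ => nonneg k x) (fun _ _ => le_max_right _ _)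
      (((monotone k).monovary hfactor_mono).monovaryOn _)

lemma natCast (k d : ℕ) : truncDescFactorial k d = k.factorial * d.choose k := by
  rw [← Nat.cast_mul, ← Nat.descFactorial_eq_factorial_mul_choose,
    Nat.descFactorial_eq_prod_range, Nat.cast_prod]
  refine prod_congr rfl fun i _ => ?_
  rcases le_total i d with h | h
  · rw [Nat.cast_sub h, max_eq_left (sub_nonneg.2 (by exact_mod_cast h))]
  · rw [Nat.sub_eq_zero_of_le h, max_eq_right (sub_nonpos.2 (by exact_mod_cast h)), Nat.cast_zero]

end truncDescFactorial

lemma gbinom_of_lt {x : ℝ} {k : ℕ} (h : x < k) : gbinom x k = 0 :=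
  if_neg h.not_ge

lemma factorial_mul_gbinom_of_le {x : ℝ} {k : ℕ} (h : (k : ℝ) ≤ x) :
    k.factorial * gbinom x k = truncDescFactorial k x := by
  rw [gbinom, if_pos h, mul_div_cancel₀ _ (by positivity)]
  refine prod_congr rfl fun i hi => (max_eq_left ?_).symm
  have : (i : ℝ) < k := by exact_mod_cast mem_range.mp hi
  linarith

lemma factorial_mul_gbinom_le (x : ℝ) (k : ℕ) :
    k.factorial * gbinom x k ≤ truncDescFactorial k x := by
  rcases lt_or_ge x k with h | h
  · simpa [gbinom_of_lt h] using truncDescFactorial.nonneg k x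
  · exact (factorial_mul_gbinom_of_le h).le

lemma gbinom_natCast (d k : ℕ) : gbinom d k = d.choose k := by
  rcases lt_or_ge d k with h | h
  · rw [gbinom_of_lt (by exact_mod_cast h), Nat.choose_eq_zero_of_lt h, Nat.cast_zero]
  · have := factorial_mul_gbinom_of_le (x := d) (k := k) (by exact_mod_cast h)
    rw [truncDescFactorial.natCast] at this
    exact mul_left_cancel₀ (by positivity) this

lemma div_mul_le_of_le {G₀ : Type*} [GroupWithZero G₀] [Preorder G₀] {a b c : G₀} (h : a ≤ c)
    (hc : 0 ≤ c) : a / b * b ≤ c := by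
  rcases eq_or_ne b 0 with rfl | hb
  · rwa [mul_zero]
  · rwa [div_mul_cancel₀ a hb]

lemma card_mul_gbinom_le_sum_choose {ι : Type*} (t : Finset ι) (d : ι → ℕ) (k : ℕ) {x : ℝ}
    (hx : x * #t ≤ (∑ i ∈ t, d i : ℕ)) :
    #t * gbinom x k ≤ (∑ i ∈ t, (d i).choose k : ℕ) := by
  rcases t.eq_empty_or_nonempty with rfl | ht
  · simp
  have hcard : (0 : ℝ) < #t := by exact_mod_cast ht.card_pos
  have hjensen := (truncDescFactorial.convexOn k).map_sum_le (t := t)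
    (w := fun _ => (#t : ℝ)⁻¹) (p := fun i => (d i : ℝ)) (fun _ _ => by positivity)
    (by rw [sum_const, nsmul_eq_mul, mul_inv_cancel₀ hcard.ne']) (fun _ _ => Set.mem_univ _)
  simp only [smul_eq_mul, ← mul_sum, truncDescFactorial.natCast] at hjensen
  push_cast at hx ⊢
  have hxavg : x ≤ (#t : ℝ)⁻¹ * ∑ i ∈ t, (d i : ℝ) := by
    rw [inv_mul_eq_div, le_div_iff₀ hcard]; exact hx
  refine le_of_mul_le_mul_left ?_ (by positivity : (0 : ℝ) < k.factorial)
  calc (k.factorial : ℝ) * (#t * gbinom x k) = #t * (k.factorial * gbinom x k) := by ring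
    _ ≤ #t * truncDescFactorial k ((#t : ℝ)⁻¹ * ∑ i ∈ t, (d i : ℝ)) := by
      gcongr
      exact (factorial_mul_gbinom_le x k).trans (truncDescFactorial.monotone k hxavg)
    _ ≤ #t * ((#t : ℝ)⁻¹ * (k.factorial * ∑ i ∈ t, ((d i).choose k : ℝ))) := by gcongr
    _ = k.factorial * ∑ i ∈ t, ((d i).choose k : ℝ) := by
      rw [← mul_assoc, mul_inv_cancel₀ hcard.ne', one_mul]

section DoubleCounting

variable {α β : Type*} [Fintype α] [Fintype β] (G : Finset (α × β))

noncomputable def commonNeighbors (A : Finset α) : Finset β :=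
  univ.filter fun y => ∀ x ∈ A, (x, y) ∈ G

noncomputable def leftNeighbors (y : β) : Finset α := univ.filter fun x => (x, y) ∈ G

lemma card_bicliques_eq_sum_choose (a b : ℕ)
    [DecidablePred fun AB : Finset α × Finset β => ∀ x ∈ AB.1, ∀ y ∈ AB.2, (x, y) ∈ G] :
    #((powersetCard a univ ×ˢ powersetCard b univ).filter
      fun AB : Finset α × Finset β => ∀ x ∈ AB.1, ∀ y ∈ AB.2, (x, y) ∈ G) =
    ∑ A ∈ powersetCard a univ, (#(commonNeighbors G A)).choose b := by
  rw [card_filter, sum_product]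
  refine sum_congr rfl fun A _ => ?_
  rw [← card_filter, ← card_powersetCard]
  congr 1
  ext B
  simp [commonNeighbors, subset_iff]
  tauto

lemma sum_card_commonNeighbors (a : ℕ) :
    ∑ A ∈ powersetCard a univ, #(commonNeighbors G A) =
    ∑ y, (#(leftNeighbors G y)).choose a := by
  simp only [commonNeighbors, card_filter]
  rw [sum_comm]
  refine sum_congr rfl fun y _ => ?_
  rw [← card_filter, ← card_powersetCard]
  congr 1
  ext A
  simp [leftNeighbors, subset_iff, and_comm]

lemma sum_card_leftNeighbors : ∑ y, #(leftNeighbors G y) = #G := by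
  simp only [leftNeighbors, card_filter]
  rw [sum_comm, ← Fintype.sum_prod_type', ← card_filter, filter_univ_mem]

end DoubleCounting

theorem stmt0_general (n m a b : ℕ) (G : Finset (Fin n × Fin n)) (hm : G.card = m) :
    gbinom n a * gbinom ((n * gbinom ((m : ℝ) / n) a) / gbinom n a) b ≤
    ((((Finset.univ.powersetCard a) ×ˢ (Finset.univ.powersetCard b)).filter
      (fun AB : Finset (Fin n) × Finset (Fin n) =>
        ∀ x ∈ AB.1, ∀ y ∈ AB.2, (x, y) ∈ G)).card : ℝ) := by
  set S := ∑ A ∈ powersetCard a univ, #(commonNeighbors G A)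
  have hcard : (#(powersetCard a (univ : Finset (Fin n))) : ℝ) = gbinom n a := by
    rw [card_powersetCard, card_univ, Fintype.card_fin, gbinom_natCast]
  have hS : n * gbinom ((m : ℝ) / n) a ≤ S := by
    have := card_mul_gbinom_le_sum_choose univ (fun y => #(leftNeighbors G y)) a
      (x := (m : ℝ) / n) (by
        rw [sum_card_leftNeighbors, hm, card_univ, Fintype.card_fin]
        exact div_mul_le_of_le le_rfl m.cast_nonneg)
    rwa [card_univ, Fintype.card_fin, ← sum_card_commonNeighbors] at this
  have := card_mul_gbinom_le_sum_choose (powersetCard a univ) (fun A => #(commonNeighbors G A)) b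
    (x := n * gbinom ((m : ℝ) / n) a / gbinom n a) (by
      rw [hcard]
      exact div_mul_le_of_le hS S.cast_nonneg)
  rwa [hcard, ← card_bicliques_eq_sum_choose] at this

/-- Theoretical lower bound: the number of copies of `K_{a,b}` with `a`-side in `X`
in a bipartite graph `G ⊆ K_{n,n}` with `m` edges is at least
`C(n,a) * C(n*C(m/n,a)/C(n,a), b)`. -/
theorem stmt0 (n m a b : ℕ) (hn : 0 < n) (G : Finset (Fin n × Fin n)) (hm : G.card = m) :
    gbinom n a * gbinom ((n * gbinom ((m : ℝ) / n) a) / gbinom n a) b ≤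
    ((((Finset.univ.powersetCard a) ×ˢ (Finset.univ.powersetCard b)).filter
      (fun AB : Finset (Fin n) × Finset (Fin n) =>
        ∀ x ∈ AB.1, ∀ y ∈ AB.2, (x, y) ∈ G)).card : ℝ) :=
  stmt0_general n m a b G hm
end

section
/- Let n = q² + q + 1 be odd and let D ⊆ ℤ/nℤ be a planar difference set of size q+1 (every nonzero element has exactly one representation as a difference of two elements of D). Then the number of elements g ∈ ℤ/nℤ such that D ∪ {g} is a proper extension in which every nonzero element has at most two representations as a difference (i.e., g ∉ D and there is no pair d, d' ∈ D with d + d' = 2g) equals C(q,2) = q(q-1)/2. -/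
/-!
A planar difference set is a Sidon set: `a + b = c + d` rearranges to `a - c = d - b`, and the
uniqueness of differences forces `{a, b} = {c, d}`. Hence the `C(q + 2, 2)` unordered pairs from `D`
have distinct sums, so `D + D` has exactly that many elements. Since `n` is odd, doubling is a
bijection of `ℤ/nℤ`, and `g` is a completion element exactly when `2g ∉ D + D` (the condition
`g ∉ D` is the case `d = d' = g`). This leaves `q² + q + 1 - C(q + 2, 2) = C(q, 2)` elements.
-/

open Finset
open scoped Classical Pointwise

def IsSidonSet {G : Type*} [AddCommMonoid G] (D : Finset G) : Prop :=
  ∀ a ∈ D, ∀ b ∈ D, ∀ c ∈ D, ∀ d ∈ D, a + b = c + d → s(a, b) = s(c, d)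

section Sidon

variable {G : Type*} [AddCommGroup G] [DecidableEq G] {D : Finset G}

theorem isSidonSet_of_card_filter_sub_le_one
    (h : ∀ g : G, g ≠ 0 → #((D ×ˢ D).filter (fun p => p.1 - p.2 = g)) ≤ 1) : IsSidonSet D := by
  intro a ha b hb c hc d hd habcd
  by_cases hac : a = c
  · subst hac
    rw [add_left_cancel habcd]
  · have hdb : d - b = a - c := by rw [sub_eq_sub_iff_add_eq_add, add_comm, habcd, add_comm]
    have hpair : (a, c) = (d, b) :=
      card_le_one.mp (h _ (sub_ne_zero.mpr hac)) _ (by simp [ha, hc]) _ (by simp [hd, hb, hdb])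
    simp only [Prod.mk.injEq] at hpair
    rw [hpair.1, hpair.2, Sym2.eq_swap]

theorem IsSidonSet.card_add_self (hD : IsSidonSet D) : #(D + D) = (#D + 1).choose 2 := by
  let sum : Sym2 G → G := Sym2.lift ⟨(· + ·), add_comm⟩
  have himage : D + D = D.sym2.image sum := by
    ext g
    simp only [mem_add, mem_image, Sym2.exists, mk_mem_sym2_iff, sum, Sym2.lift_mk]
    constructor
    · rintro ⟨a, ha, b, hb, rfl⟩
      exact ⟨a, b, ⟨ha, hb⟩, rfl⟩
    · rintro ⟨a, b, ⟨ha, hb⟩, rfl⟩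
      exact ⟨a, ha, b, hb, rfl⟩
  have hinj : Set.InjOn sum D.sym2 := by
    rintro ⟨a, b⟩ hab ⟨c, d⟩ hcd hsum
    rw [mem_coe, mk_mem_sym2_iff] at hab hcd
    exact hD a hab.1 b hab.2 c hcd.1 d hcd.2 hsum
  rw [himage, card_image_of_injOn hinj, card_sym2]

end Sidon

theorem card_filter_unit_mul_mem {M : Type*} [Monoid M] [Fintype M] [DecidableEq M] (u : Mˣ)
    (S : Finset M) : #(univ.filter (fun g => (u : M) * g ∈ S)) = #S :=
  card_nbij' (fun g => u * g) (fun s => u⁻¹ * s) (fun g hg => by simpa using hg)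
    (fun s hs => by simpa using hs) (fun g _ => by simp) (fun s _ => by simp)

theorem card_filter_forall_add_ne_two_mul {R : Type*} [Semiring R] [Fintype R] [DecidableEq R]
    (h2 : IsUnit (2 : R)) (D : Finset R) :
    #(univ.filter (fun g => g ∉ D ∧ ∀ d ∈ D, ∀ d' ∈ D, d + d' ≠ 2 * g))
      = Fintype.card R - #(D + D) := by
  have hfilter : univ.filter (fun g => g ∉ D ∧ ∀ d ∈ D, ∀ d' ∈ D, d + d' ≠ 2 * g)
      = univ.filter (fun g => ¬ (h2.unit : R) * g ∈ D + D) := by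
    ext g
    simp only [mem_filter, mem_univ, true_and, IsUnit.unit_spec, mem_add, not_exists, not_and]
    exact ⟨fun hg d hd d' hd' => hg.2 d hd d' hd',
      fun hg => ⟨fun hgD => hg g hgD g hgD (two_mul g).symm, hg⟩⟩
  rw [hfilter, filter_not, card_sdiff_of_subset (filter_subset _ _), card_filter_unit_mul_mem,
    card_univ]

theorem ZMod.isUnit_two_of_odd {n : ℕ} (hn : Odd n) : IsUnit (2 : ZMod n) :=
  mod_cast (ZMod.isUnit_iff_coprime 2 n).mpr (Nat.coprime_two_left.mpr hn)

theorem sq_add_self_add_one_sub_choose_two (q : ℕ) :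
    q ^ 2 + q + 1 - (q + 1 + 1).choose 2 = q * (q - 1) / 2 := by
  have hsucc : (q + 1 + 1).choose 2 = q.choose 2 + 2 * q + 1 := by
    rw [Nat.choose_succ_succ (q + 1) 1, Nat.choose_succ_succ q 1, Nat.choose_one_right,
      Nat.choose_one_right]
    ring
  have hdouble : 2 * q.choose 2 = q * (q - 1) := by
    rw [Nat.choose_two_right, Nat.mul_div_cancel' (Nat.even_mul_pred_self q).two_dvd]
  have hsq : q ^ 2 + q + 1 = q * (q - 1) + 2 * q + 1 := by
    rcases q with _ | q
    · rfl
    · rw [Nat.add_sub_cancel]; ring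
  omega

theorem stmt8_general (q n : ℕ) (hn : n = q ^ 2 + q + 1) [NeZero n] (hodd : Odd n)
    (D : Finset (ZMod n)) (hcard : D.card = q + 1)
    (hplanar : ∀ g : ZMod n, g ≠ 0 → ((D ×ˢ D).filter (fun p => p.1 - p.2 = g)).card = 1) :
    ((univ : Finset (ZMod n)).filter
        (fun g => g ∉ D ∧ ∀ d ∈ D, ∀ d' ∈ D, d + d' ≠ 2 * g)).card = q * (q - 1) / 2 := by
  have hSidon : IsSidonSet D :=
    isSidonSet_of_card_filter_sub_le_one fun g hg => (hplanar g hg).le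
  rw [card_filter_forall_add_ne_two_mul (ZMod.isUnit_two_of_odd hodd), hSidon.card_add_self,
    hcard, ZMod.card, hn, sq_add_self_add_one_sub_choose_two]

/-- For a planar difference set `D` of size `q+1` in `ℤ/nℤ`, `n = q²+q+1` odd, the number of
completion elements (`g ∉ D` with `d + d' ≠ 2g` for all `d, d' ∈ D`) equals `q(q-1)/2`. -/
theorem stmt8 (q n : ℕ) (hq : 1 ≤ q) (hn : n = q ^ 2 + q + 1) [NeZero n] (hodd : Odd n)
    (D : Finset (ZMod n)) (hcard : D.card = q + 1)
    (hplanar : ∀ g : ZMod n, g ≠ 0 → ((D ×ˢ D).filter (fun p => p.1 - p.2 = g)).card = 1) :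
    ((univ : Finset (ZMod n)).filter
        (fun g => g ∉ D ∧ ∀ d ∈ D, ∀ d' ∈ D, d + d' ≠ 2 * g)).card = q * (q - 1) / 2 :=
  stmt8_general q n hn hodd D hcard hplanar
end

section
/- Let q be an odd prime power and k a positive divisor of q - 1. The bipartite graph G^{(q,k)} on vertex classes V₁ = V₂ = 𝔽_q × {1, …, (q-1)/k}, with (a,b) ∈ V₁ adjacent to (α,β) ∈ V₂ iff g^β a + g^b α = g^{j(q-1)/k} in 𝔽_q for some j ∈ ℤ/kℤ (g a fixed primitive root of 𝔽_q), is (q-1)-regular; in particular it has q(q-1)²/k edges. -/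
open Finset
open scoped Classical

/-!
The right-hand sides `g^{j(q-1)/k}`, `0 ≤ j < k`, are `k` distinct elements, since `g` has
order `q - 1`. For a fixed vertex `(a, b)` and a fixed `β`, the map `α ↦ g^β a + g^b α` is a
bijection of `𝔽_q`, so exactly `k` values of `α` give a neighbour. Summing over the `(q-1)/k`
values of `β` gives degree `q - 1`, and summing degrees over `V₁` counts the `q (q-1)² / k`
edges.
-/

/-- The second coordinate `i : Fin ((q-1)/k)` of a vertex stands for the exponent `b = i + 1`. -/
def morsAdj {F : Type*} [Field F] (q k : ℕ) (g : Fˣ) :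
    F × Fin ((q - 1) / k) → F × Fin ((q - 1) / k) → Prop :=
  fun v w => ∃ j < k,
    (g : F) ^ (w.2.val + 1) * v.1 + (g : F) ^ (v.2.val + 1) * w.1
      = (g : F) ^ (j * ((q - 1) / k))

theorem card_filter_equiv_mem {α β : Type*} [Fintype α] (e : α ≃ β) (s : Finset β) :
    #{x | e x ∈ s} = #s := by
  rw [← card_map e.symm.toEmbedding]
  congr 1
  ext x
  simp

theorem card_filter_mul_add_mem {K : Type*} [DivisionRing K] [Fintype K] {a : K} (ha : a ≠ 0)
    (b : K) (s : Finset K) : #{x | a * x + b ∈ s} = #s :=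
  card_filter_equiv_mem ((Equiv.mulLeft₀ a ha).trans (Equiv.addRight b)) s

theorem card_filter_prod_add_mul_mem {K ι : Type*} [DivisionRing K] [Fintype K] [Fintype ι]
    {a : K} (ha : a ≠ 0) (b : ι → K) (s : Finset K) :
    #{w : K × ι | b w.2 + a * w.1 ∈ s} = #s * Fintype.card ι := by
  rw [card_filter, Fintype.sum_prod_type_right]
  simp_rw [← card_filter, add_comm (b _), card_filter_mul_add_mem ha, sum_const, card_univ,
    smul_eq_mul, mul_comm]

theorem card_filter_prod_eq_sum {α : Type*} [Fintype α] (r : α → α → Prop) :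
    #{p : α × α | r p.1 p.2} = ∑ v, #{w | r v w} := by
  rw [card_filter, Fintype.sum_prod_type]
  simp_rw [← card_filter]

theorem card_image_range_pow_mul {M : Type*} [Monoid M] {x : M} {k m : ℕ}
    (hx : orderOf x = k * m) (hm : 0 < m) :
    #((range k).image fun j => x ^ (j * m)) = k := by
  rw [card_image_of_injOn, card_range]
  intro i hi j hj hij
  have hlt : ∀ {l}, l ∈ (range k : Set ℕ) → l * m ∈ Set.Iio (orderOf x) := fun hl => by
    rw [hx, Set.mem_Iio]
    exact Nat.mul_lt_mul_of_pos_right (mem_range.1 hl) hm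
  exact Nat.eq_of_mul_eq_mul_right hm (pow_injOn_Iio_orderOf (hlt hi) (hlt hj) hij)

theorem morsAdj_iff_mem {F : Type*} [Field F] (q k : ℕ) (g : Fˣ) (v w : F × Fin ((q - 1) / k)) :
    morsAdj q k g v w ↔
      (g : F) ^ (w.2.val + 1) * v.1 + (g : F) ^ (v.2.val + 1) * w.1 ∈
        (range k).image fun j => (g : F) ^ (j * ((q - 1) / k)) := by
  simp only [morsAdj, mem_image, mem_range, eq_comm]

/-- `G^{(q,k)}` is `(q-1)`-regular; in particular it has `q(q-1)²/k` edges. -/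
theorem stmt11 {F : Type*} [Field F] [Fintype F] (q k : ℕ) (hq : Fintype.card F = q)
    (hk : 0 < k) (hdvd : k ∣ q - 1) (g : Fˣ) (hgen : ∀ x : Fˣ, x ∈ Subgroup.zpowers g) :
    (∀ v : F × Fin ((q - 1) / k),
        ((univ : Finset (F × Fin ((q - 1) / k))).filter (fun w => morsAdj q k g v w)).card
          = q - 1) ∧
      ((univ : Finset ((F × Fin ((q - 1) / k)) × (F × Fin ((q - 1) / k)))).filter
          (fun p => morsAdj q k g p.1 p.2)).card = q * (q - 1) ^ 2 / k := by
  set m := (q - 1) / k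
  have hkm : k * m = q - 1 := Nat.mul_div_cancel' hdvd
  have hm : 0 < m := Nat.div_pos (Nat.le_of_dvd (by grind [Fintype.one_lt_card]) hdvd) hk
  have horder : orderOf (g : F) = k * m := by
    rw [orderOf_units, orderOf_eq_card_of_forall_mem_zpowers hgen, Nat.card_units,
      Nat.card_eq_fintype_card, hq, hkm]
  have hdeg : ∀ v : F × Fin m, #{w | morsAdj q k g v w} = q - 1 := fun v => by
    rw [filter_congr fun w _ => morsAdj_iff_mem q k g v w,
      card_filter_prod_add_mul_mem (pow_ne_zero _ g.ne_zero)
        fun β : Fin m => _ ^ (β.val + 1) * v.1,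
      card_image_range_pow_mul horder hm, Fintype.card_fin, hkm]
  refine ⟨hdeg, ?_⟩
  rw [card_filter_prod_eq_sum, sum_congr rfl fun v _ => hdeg v, sum_const, card_univ,
    Fintype.card_prod, Fintype.card_fin, hq, smul_eq_mul, sq, ← hkm]
  rw [show q * (k * m * (k * m)) = q * m * (k * m) * k by ring, Nat.mul_div_cancel _ hk]
end

section
/- Let G ⊆ K_{n,n} be a bipartite graph with m edges containing the incidence graph of a projective plane of order q (n = q² + q + 1) as a spanning subgraph, where m > z + n with z = (q+1)n the number of incidences of the plane. Then there exist two vertices P (a point) and e, f (lines) such that P is adjacent to both e and f in G but incident to neither in the plane; consequently there is a pair of vertices with codegree at least 3, so G does not meet the improved theoretical lower bound (which requires all codegrees to differ by at most 1 from each other while some pairs have codegree 1). -/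
open Finset
open scoped Classical

/-! Counting incidences point by point, the `m - (q+1)n > n` new incidences cannot be spread over
the `n` points one at a time, so some point `P` gets two new lines `e ≠ f`. These meet in a point
`Q ≠ P`, and `e`, `f` and the plane's line `PQ` are three distinct common neighbours of `P`
and `Q` in `G`. -/

section Incidence

variable {α β : Type*} [Fintype β]

theorem card_filter_prod_eq_sum_card_filter [Fintype α] (G : α → β → Prop) :
    #(univ.filter fun pl : α × β => G pl.1 pl.2) = ∑ a, #(univ.filter fun b => G a b) := by
  simp only [card_filter, Fintype.sum_prod_type]

theorem card_filter_eq_add_card_filter_and_not {γ : Type*} (s : Finset γ) {P Q : γ → Prop}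
    (hPQ : ∀ x, P x → Q x) :
    #(s.filter Q) = #(s.filter P) + #(s.filter fun x => Q x ∧ ¬ P x) := by
  rw [← card_filter_add_card_filter_not (s := s.filter Q) P, filter_filter,
    filter_filter]
  congr 2
  ext x
  simpa using fun _ => hPQ x

theorem exists_of_card_filter_eq_one {γ : Type*} {s : Finset γ} {P : γ → Prop}
    [DecidablePred P]
    (h : #(s.filter P) = 1) : ∃ x, P x :=
  (card_pos.mp (h ▸ one_pos)).elim fun x hx => ⟨x, (mem_filter.mp hx).2⟩

theorem exists_two_new_incidences [Fintype α] (I G : α → β → Prop) (k : ℕ)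
    (hdeg : ∀ p, #(univ.filter fun l => I p l) = k) (hsub : ∀ p l, I p l → G p l)
    (hlt : k * Fintype.card α + Fintype.card α < #(univ.filter fun pl : α × β => G pl.1 pl.2)) :
    ∃ P e f, e ≠ f ∧ G P e ∧ G P f ∧ ¬ I P e ∧ ¬ I P f := by
  have hrow : ∀ p, #(univ.filter fun l => G p l)
      = k + #(univ.filter fun l => G p l ∧ ¬ I p l) := fun p => by
    rw [card_filter_eq_add_card_filter_and_not _ (hsub p), hdeg p]
  have hnew : ∑ _p : α, 1 < ∑ p, #(univ.filter fun l => G p l ∧ ¬ I p l) := by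
    rw [card_filter_prod_eq_sum_card_filter, Fintype.sum_congr _ _ hrow, sum_add_distrib] at hlt
    simp only [sum_const, card_univ, smul_eq_mul, mul_one] at hlt ⊢
    linarith
  obtain ⟨P, -, hP⟩ := exists_lt_of_sum_lt hnew
  obtain ⟨e, he, f, hf, hef⟩ := one_lt_card.mp hP
  simp only [mem_filter, mem_univ, true_and] at he hf
  exact ⟨P, e, f, hef, he.1, hf.1, he.2, hf.2⟩

theorem exists_three_le_codegree_of_new_incidences {I G : α → β → Prop}
    (hjoin : ∀ p p', p ≠ p' → ∃ l, I p l ∧ I p' l)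
    (hmeet : ∀ l l', l ≠ l' → ∃ p, I p l ∧ I p l') (hsub : ∀ p l, I p l → G p l)
    {P : α} {e f : β} (hef : e ≠ f) (hPe : G P e) (hPf : G P f) (hIe : ¬ I P e)
    (hIf : ¬ I P f) :
    ∃ Q, P ≠ Q ∧ 3 ≤ #(univ.filter fun l => G P l ∧ G Q l) := by
  obtain ⟨Q, hQe, hQf⟩ := hmeet e f hef
  have hPQ : P ≠ Q := by rintro rfl; exact hIe hQe
  obtain ⟨l, hPl, hQl⟩ := hjoin P Q hPQ
  refine ⟨Q, hPQ, two_lt_card.mpr ⟨e, ?_, f, ?_, l, ?_, hef, ?_, ?_⟩⟩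
  · simpa using ⟨hPe, hsub _ _ hQe⟩
  · simpa using ⟨hPf, hsub _ _ hQf⟩
  · simpa using ⟨hsub _ _ hPl, hsub _ _ hQl⟩
  · rintro rfl; exact hIe hPl
  · rintro rfl; exact hIf hPl

end Incidence

theorem stmt14_general (q n m : ℕ)
    (I G : Fin n → Fin n → Prop)
    (hpointdeg : ∀ p, ((univ : Finset (Fin n)).filter (fun l => I p l)).card = q + 1)
    (hpts : ∀ p p' : Fin n, p ≠ p' →
      ((univ : Finset (Fin n)).filter (fun l => I p l ∧ I p' l)).card = 1)
    (hlines : ∀ l l' : Fin n, l ≠ l' →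
      ((univ : Finset (Fin n)).filter (fun p => I p l ∧ I p l')).card = 1)
    (hsub : ∀ p l, I p l → G p l)
    (hm : ((univ : Finset (Fin n × Fin n)).filter (fun pl => G pl.1 pl.2)).card = m)
    (hex : (q + 1) * n + n < m) :
    (∃ P e f : Fin n, e ≠ f ∧ G P e ∧ G P f ∧ ¬ I P e ∧ ¬ I P f) ∧
      (∃ P Q : Fin n, P ≠ Q ∧
        3 ≤ ((univ : Finset (Fin n)).filter (fun l => G P l ∧ G Q l)).card) := by
  have hnew := exists_two_new_incidences I G (q + 1) hpointdeg hsub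
    (by rwa [Fintype.card_fin, hm])
  refine ⟨hnew, ?_⟩
  obtain ⟨P, e, f, hef, hPe, hPf, hIe, hIf⟩ := hnew
  exact ⟨P, exists_three_le_codegree_of_new_incidences
    (fun p p' h => exists_of_card_filter_eq_one (hpts p p' h))
    (fun l l' h => exists_of_card_filter_eq_one (hlines l l' h)) hsub hef hPe hPf hIe hIf⟩

/-- If `G ⊆ K_{n,n}` with `m > (q+1)n + n` edges contains the incidence graph `I` of a
projective plane of order `q` (`n = q²+q+1`), then some point `P` is joined in `G` to two
lines `e ≠ f` not through `P` in the plane, and consequently some pair of vertices has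
codegree at least `3` in `G`. -/
theorem stmt14 (q n m : ℕ) (hn : n = q ^ 2 + q + 1)
    (I G : Fin n → Fin n → Prop)
    (hpointdeg : ∀ p, ((univ : Finset (Fin n)).filter (fun l => I p l)).card = q + 1)
    (hlinedeg : ∀ l, ((univ : Finset (Fin n)).filter (fun p => I p l)).card = q + 1)
    (hpts : ∀ p p' : Fin n, p ≠ p' →
      ((univ : Finset (Fin n)).filter (fun l => I p l ∧ I p' l)).card = 1)
    (hlines : ∀ l l' : Fin n, l ≠ l' →
      ((univ : Finset (Fin n)).filter (fun p => I p l ∧ I p l')).card = 1)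
    (hsub : ∀ p l, I p l → G p l)
    (hm : ((univ : Finset (Fin n × Fin n)).filter (fun pl => G pl.1 pl.2)).card = m)
    (hex : (q + 1) * n + n < m) :
    (∃ P e f : Fin n, e ≠ f ∧ G P e ∧ G P f ∧ ¬ I P e ∧ ¬ I P f) ∧
      (∃ P Q : Fin n, P ≠ Q ∧
        3 ≤ ((univ : Finset (Fin n)).filter (fun l => G P l ∧ G Q l)).card) :=
  stmt14_general q n m I G hpointdeg hpts hlines hsub hm hex
end

section
/- If G ⊆ K_{n,n} has m = C·n^{3/2}(1+o(1)) edges with C > 1 fixed, then the number of C₄'s in G is at least ((C⁴ - C²)/4 + o(1))·n², which for C² = k an integer equals (k(k-1)/4 + o(1))n². In exact form: for any bipartite G on n+n vertices with m edges and m(m-n) ≥ n²(n-1), the number of C₄'s is at least (1/2)·C(n,2)·(m(m-n)/(n²(n-1)))·(m(m-n)/(n²(n-1)) - 1). -/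
/-!
For a right vertex `y` let `d y` be its degree, and for a pair `s` of left vertices let `f s` be
the number of common neighbours of `s`. Double counting gives `∑ₛ f s = ∑_y C(d y, 2)` and
`#C₄ = ∑ₛ C(f s, 2)`. Jensen's inequality for `x ↦ x (x - 1)`, applied over the `n` right vertices
(where `∑ d = m`), gives `∑ₛ f s ≥ N D` with `N = C(n, 2)`; applied again over the `N` pairs it
gives `2 N · #C₄ ≥ S (S - N)` with `S = ∑ₛ f s`, and since `x ↦ x (x - N)` is increasing for
`x ≥ N / 2` and `S ≥ N D ≥ N`, this is at least `N² D (D - 1)`.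
-/

open Finset

theorem Finset.filter_powersetCard_forall_mem {α : Type*} (t : Finset α) (p : α → Prop)
    [DecidablePred p] (k : ℕ) :
    (t.powersetCard k).filter (fun s => ∀ x ∈ s, p x) = (t.filter p).powersetCard k := by
  ext s
  simp only [mem_filter, mem_powersetCard, subset_iff]
  aesop

theorem Finset.card_filter_powersetCard_forall_mem {α : Type*} (t : Finset α) (p : α → Prop)
    [DecidablePred p] (k : ℕ) :
    #((t.powersetCard k).filter (fun s => ∀ x ∈ s, p x)) = (#(t.filter p)).choose k := by
  rw [filter_powersetCard_forall_mem, card_powersetCard]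

/-- Jensen's inequality for `x ↦ x (x - 1)`. -/
theorem Finset.sum_mul_sum_sub_card_le {ι : Type*} (s : Finset ι) (f : ι → ℝ) :
    (∑ i ∈ s, f i) * (∑ i ∈ s, f i - #s) ≤ #s * ∑ i ∈ s, f i * (f i - 1) := by
  have hsq := sq_sum_le_card_mul_sum_sq (s := s) (f := f)
  have hexpand : (#s : ℝ) * ∑ i ∈ s, f i * (f i - 1) =
      #s * ∑ i ∈ s, f i ^ 2 - #s * ∑ i ∈ s, f i := by
    rw [← mul_sub, ← sum_sub_distrib]
    simp only [sq, mul_sub, mul_one]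
  rw [hexpand]
  nlinarith

theorem Finset.sum_mul_sum_sub_card_le_sum_choose_two {ι : Type*} (s : Finset ι) (f : ι → ℕ) :
    (∑ i ∈ s, (f i : ℝ)) * (∑ i ∈ s, (f i : ℝ) - #s) ≤
      2 * #s * ∑ i ∈ s, ((f i).choose 2 : ℝ) := by
  have hchoose : 2 * (#s : ℝ) * ∑ i ∈ s, ((f i).choose 2 : ℝ) =
      #s * ∑ i ∈ s, (f i : ℝ) * (f i - 1) := by
    simp only [Nat.cast_choose_two, mul_sum]
    exact sum_congr rfl fun i _ => by ring
  rw [hchoose]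
  exact sum_mul_sum_sub_card_le s _

section Bipartite

variable {α β : Type*} [Fintype α] [Fintype β] [DecidableEq α] [DecidableEq β]
  (G : Finset (α × β))

def commonNbrs (s : Finset α) : Finset β := {y | ∀ x ∈ s, (x, y) ∈ G}

theorem card_filter_forall_mem_powersetCard_product (k l : ℕ)
    [DecidablePred fun st : Finset α × Finset β => ∀ x ∈ st.1, ∀ y ∈ st.2, (x, y) ∈ G] :
    #((powersetCard k (univ : Finset α) ×ˢ powersetCard l (univ : Finset β)).filter
        fun st => ∀ x ∈ st.1, ∀ y ∈ st.2, (x, y) ∈ G) =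
      ∑ s ∈ powersetCard k univ, (#(commonNbrs G s)).choose l := by
  rw [card_filter, sum_product]
  refine sum_congr rfl fun s _ => ?_
  refine (card_filter _ _).symm.trans ?_
  unfold commonNbrs
  convert card_filter_powersetCard_forall_mem univ (fun y => ∀ x ∈ s, (x, y) ∈ G) l using 2
  ext t
  simp only [mem_filter]
  exact and_congr_right fun _ => ⟨fun h y hy x hx => h x hx y hy, fun h x hx y hy => h y hy x hx⟩

theorem sum_card_commonNbrs (k : ℕ) :
    ∑ s ∈ powersetCard k univ, #(commonNbrs G s) = ∑ y : β, (#{x | (x, y) ∈ G}).choose k := by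
  refine (sum_card_bipartiteAbove_eq_sum_card_bipartiteBelow
    (fun (s : Finset α) (y : β) => ∀ x ∈ s, (x, y) ∈ G) (s := powersetCard k univ)
    (t := univ)).trans (sum_congr rfl fun y _ => ?_)
  convert card_filter_powersetCard_forall_mem univ (fun x => (x, y) ∈ G) k using 2
  ext
  simp only [mem_bipartiteBelow, mem_filter]

theorem sum_card_filter_mem_eq_card : ∑ y : β, #{x | (x, y) ∈ G} = #G := by
  simp only [card_filter]
  rw [sum_comm, ← sum_product (f := fun p : α × β => if p ∈ G then 1 else 0), univ_product_univ,
    ← card_filter]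
  congr 1
  ext
  simp

end Bipartite

theorem mul_mul_sub_one_le_of_mul_le {N D S c : ℝ} (hN : 0 < N) (hD : 1 ≤ D) (hS : N * D ≤ S)
    (hc : S * (S - N) ≤ 2 * N * c) : N * D * (D - 1) ≤ 2 * c := by
  have hmono : N * D * (N * D - N) ≤ S * (S - N) := by
    nlinarith [mul_nonneg (sub_nonneg.2 hS) (by nlinarith : 0 ≤ S + N * D - N)]
  refine le_of_mul_le_mul_left ?_ hN
  nlinarith

/-- Exact supersaturation bound for `C₄`: if `G ⊆ K_{n,n}` has `m` edges and
`m(m-n) ≥ n²(n-1)`, then the number of `C₄`'s (pairs of 2-subsets, one in each class, with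
all four edges present) is at least `(n(n-1)/4)·D·(D-1)` with `D = m(m-n)/(n²(n-1))`. -/
theorem stmt16 (n m : ℕ) (G : Finset (Fin n × Fin n)) (hm : G.card = m)
    (hD : (n : ℝ) ^ 2 * ((n : ℝ) - 1) ≤ (m : ℝ) * ((m : ℝ) - n)) :
    (n : ℝ) * ((n : ℝ) - 1) / 4 *
        ((m : ℝ) * ((m : ℝ) - n) / ((n : ℝ) ^ 2 * ((n : ℝ) - 1))) *
        ((m : ℝ) * ((m : ℝ) - n) / ((n : ℝ) ^ 2 * ((n : ℝ) - 1)) - 1) ≤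
      (((((univ : Finset (Fin n)).powersetCard 2) ×ˢ ((univ : Finset (Fin n)).powersetCard 2)).filter
        (fun st : Finset (Fin n) × Finset (Fin n) =>
          ∀ x ∈ st.1, ∀ y ∈ st.2, (x, y) ∈ G)).card : ℝ) := by
  rcases Nat.lt_or_ge n 2 with hn | hn
  · have hzero : (n : ℝ) * ((n : ℝ) - 1) = 0 := by interval_cases n <;> norm_num
    rw [hzero, zero_div, zero_mul, zero_mul]
    positivity
  rw [card_filter_forall_mem_powersetCard_product]
  have hS := sum_mul_sum_sub_card_le_sum_choose_two univ (fun y : Fin n => #{x | (x, y) ∈ G})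
  rw [← Nat.cast_sum, sum_card_filter_mem_eq_card, hm, card_univ, Fintype.card_fin] at hS
  have hc := sum_mul_sum_sub_card_le_sum_choose_two (powersetCard 2 univ)
    (fun s : Finset (Fin n) => #(commonNbrs G s))
  rw [← Nat.cast_sum, sum_card_commonNbrs, Nat.cast_sum, card_powersetCard, card_univ,
    Fintype.card_fin, Nat.cast_choose_two] at hc
  set S : ℝ := ∑ y : Fin n, ((#{x | (x, y) ∈ G}).choose 2 : ℝ)
  set D := (m : ℝ) * (m - n) / (n ^ 2 * (n - 1)) with hD_def
  have hn1 : (1 : ℝ) < n := by exact_mod_cast hn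
  have hden : (0 : ℝ) < n ^ 2 * (n - 1) := mul_pos (by positivity) (by linarith)
  have hn1' : (n : ℝ) - 1 ≠ 0 := by linarith
  have hN : (0 : ℝ) < n * (n - 1) / 2 := by nlinarith
  have hD1 : 1 ≤ D := (one_le_div hden).2 hD
  have hND : n * (n - 1) / 2 * D ≤ S := by
    rw [hD_def, show (n : ℝ) * (n - 1) / 2 * (m * (m - n) / (n ^ 2 * (n - 1))) =
      m * (m - n) / (2 * n) by field_simp, div_le_iff₀ (by positivity)]
    linarith
  have := mul_mul_sub_one_le_of_mul_le hN hD1 hND hc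
  push_cast
  linarith
end

section
/- Let 𝒢 be a finite abelian group of odd order n, A ⊆ 𝒢 a subset of size k, and G(𝒢,A) the bipartite graph with parts {A+g : g ∈ 𝒢} (as indexed by g, i.e., vertices are group elements g representing the translate A+g) and 𝒢 itself, with g adjacent to h iff h ∈ A + g. Then the number of C₄'s in G(𝒢,A) equals (n/4)(h₂(𝒢,A) - h₁(𝒢,A)), where h_t(𝒢,A) = ∑_{0 ≠ g ∈ 𝒢} (#{(a,a') ∈ A×A : a - a' = g})^t. -/
open Finset
open scoped Classical

/-!
The common neighbourhood of `g₁ ≠ g₂` is `(A + g₁) ∩ (A + g₂)`, whose size is `δ(g₂ - g₁)`.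
Counting ordered pairs `(g₁, g₂)` instead of unordered ones, every difference `d ≠ 0` occurs
exactly `n` times, so twice the number of `C₄`'s is `n ∑_{d ≠ 0} C(δ(d), 2) = n (h₂ - h₁) / 2`.
-/

theorem filter_offDiag_pair_eq {α : Type*} {s : Finset α} {a b : α} (ha : a ∈ s) (hb : b ∈ s)
    (hab : a ≠ b) :
    {p ∈ s.offDiag | ({p.1, p.2} : Finset α) = {a, b}} = {(a, b), (b, a)} := by
  ext ⟨x, y⟩
  simp only [mem_filter, mem_offDiag, mem_insert, mem_singleton, Prod.mk.injEq,
    ← coe_inj, coe_pair, Set.pair_eq_pair_iff]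
  aesop

theorem sum_offDiag_pair {α M : Type*} [AddCommMonoid M] (s : Finset α) (f : Finset α → M) :
    ∑ p ∈ s.offDiag, f {p.1, p.2} = 2 • ∑ t ∈ s.powersetCard 2, f t := by
  have maps_to : ∀ p ∈ s.offDiag, ({p.1, p.2} : Finset α) ∈ s.powersetCard 2 := by
    intro p hp
    obtain ⟨h1, h2, hne⟩ := mem_offDiag.mp hp
    exact mem_powersetCard.mpr ⟨by simp [insert_subset_iff, h1, h2], card_pair hne⟩
  rw [← sum_fiberwise_of_maps_to maps_to, smul_sum]
  refine sum_congr rfl fun t ht => ?_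
  obtain ⟨hts, htc⟩ := mem_powersetCard.mp ht
  obtain ⟨a, b, hab, rfl⟩ := card_eq_two.mp htc
  rw [sum_congr rfl fun p hp => congrArg f (mem_filter.mp hp).2, sum_const,
    filter_offDiag_pair_eq (hts (by simp)) (hts (by simp)) hab, card_pair (by simp [hab])]

theorem sum_offDiag_univ_sub {G M : Type*} [AddGroup G] [Fintype G] [AddCommMonoid M]
    (f : G → M) :
    ∑ p ∈ (univ : Finset G).offDiag, f (p.2 - p.1)
      = Fintype.card G • ∑ d ∈ univ.filter (· ≠ 0), f d := by
  have offDiag_eq :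
      (univ : Finset G).offDiag = {p ∈ (univ ×ˢ univ : Finset (G × G)) | p.1 ≠ p.2} := by
    ext; simp
  rw [← card_univ, ← sum_const, offDiag_eq, sum_filter, sum_product]
  refine sum_congr rfl fun a _ => ?_
  rw [← sum_filter]
  exact sum_equiv (Equiv.subRight a) (by simp [sub_eq_zero, eq_comm]) (by simp)

theorem cast_sum_choose_two {ι K : Type*} [Field K] [CharZero K] (s : Finset ι) (f : ι → ℕ) :
    ((∑ i ∈ s, (f i).choose 2 : ℕ) : K) = ((∑ i ∈ s, (f i : K) ^ 2) - ∑ i ∈ s, (f i : K)) / 2 := by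
  rw [Nat.cast_sum, ← sum_sub_distrib, sum_div]
  exact sum_congr rfl fun i _ => by rw [Nat.cast_choose_two]; ring

section

variable {G : Type*} [AddCommGroup G] [Fintype G]

noncomputable def codegree (A s : Finset G) : ℕ := #{h | ∀ g ∈ s, h - g ∈ A}

/-- The paper's `δ(g)`. -/
noncomputable def diffCount (A : Finset G) (g : G) : ℕ := #{p ∈ A ×ˢ A | p.1 - p.2 = g}

theorem codegree_pair (A : Finset G) (a b : G) : codegree A {a, b} = diffCount A (b - a) := by
  have shift {p : G × G} (hp : p.1 - p.2 = b - a) : p.1 + a - b = p.2 := by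
    rw [sub_eq_sub_iff_add_eq_add.mp hp, add_sub_cancel_left]
  refine card_nbij' (fun h => (h - a, h - b)) (fun p => p.1 + a) ?_ ?_ ?_ ?_
  · intro h hh
    simp_all
  · intro p hp
    obtain ⟨hmem, hd⟩ := mem_filter.mp (mem_coe.mp hp)
    simp [shift hd, (mem_product.mp hmem).1, (mem_product.mp hmem).2]
  · intro h _
    simp
  · intro p hp
    simp [shift (mem_filter.mp (mem_coe.mp hp)).2]

theorem two_mul_sum_choose_codegree (A : Finset G) :
    2 * ∑ s ∈ (univ : Finset G).powersetCard 2, (codegree A s).choose 2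
      = Fintype.card G * ∑ d ∈ univ.filter (· ≠ 0), (diffCount A d).choose 2 := by
  rw [← smul_eq_mul, ← sum_offDiag_pair, ← smul_eq_mul, ← sum_offDiag_univ_sub]
  simp only [codegree_pair]

end

theorem stmt17_general {G : Type*} [AddCommGroup G] [Fintype G] (n : ℕ)
    (hn : Fintype.card G = n) (A : Finset G) :
    ((∑ s ∈ (univ : Finset G).powersetCard 2,
        Nat.choose (((univ : Finset G).filter (fun h : G => ∀ g₁ ∈ s, h - g₁ ∈ A)).card) 2
        : ℕ) : ℚ)
      = (n : ℚ) / 4 *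
          ((∑ g ∈ (univ : Finset G).filter (fun g => g ≠ 0),
              (((A ×ˢ A).filter (fun p => p.1 - p.2 = g)).card : ℚ) ^ 2)
            - ∑ g ∈ (univ : Finset G).filter (fun g => g ≠ 0),
              (((A ×ˢ A).filter (fun p => p.1 - p.2 = g)).card : ℚ)) := by
  have h := congrArg (Nat.cast : ℕ → ℚ) (two_mul_sum_choose_codegree A)
  rw [Nat.cast_mul, Nat.cast_mul, Nat.cast_ofNat, cast_sum_choose_two (f := diffCount A), hn] at h
  unfold codegree diffCount at h
  linear_combination h / 2

/-- For a finite abelian group `𝒢` of odd order `n` and `A ⊆ 𝒢` of size `k`, the number of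
`C₄`'s in the bipartite Cayley-type graph `G(𝒢,A)` (first class indexed by `g`, representing
the translate `A + g`; `g` adjacent to `h` iff `h ∈ A + g`, i.e. `h - g ∈ A`) equals
`(n/4)(h₂(𝒢,A) - h₁(𝒢,A))`, where `h_t = ∑_{g ≠ 0} δ(g)^t` and
`δ(g) = #{(a,a') ∈ A² : a - a' = g}`. -/
theorem stmt17 {G : Type*} [AddCommGroup G] [Fintype G] (n k : ℕ)
    (hn : Fintype.card G = n) (hodd : Odd n) (A : Finset G) (hA : A.card = k) :
    ((∑ s ∈ (univ : Finset G).powersetCard 2,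
        Nat.choose (((univ : Finset G).filter (fun h : G => ∀ g₁ ∈ s, h - g₁ ∈ A)).card) 2
        : ℕ) : ℚ)
      = (n : ℚ) / 4 *
          ((∑ g ∈ (univ : Finset G).filter (fun g => g ≠ 0),
              (((A ×ˢ A).filter (fun p => p.1 - p.2 = g)).card : ℚ) ^ 2)
            - ∑ g ∈ (univ : Finset G).filter (fun g => g ≠ 0),
              (((A ×ˢ A).filter (fun p => p.1 - p.2 = g)).card : ℚ)) :=
  stmt17_general n hn A
end
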